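/- arXiv:1402.0076 — 2 statements merged into one kernel-verified Lean document; each statement's English description precedes it below -/
import Mathlib

section
/- Let n ≥ 2, N > 0, and let ν ∈ ℝ^n with ν_1 = 1. Suppose q is a positive integer and p_2, …, p_n are integers with |ν_j − p_j/q| ≤ 1/q^{1+1/(n-1)} for j = 2, …, n. Define ν̃_1 = 1, ν̃_j = p_j/q, and α = N/q^{1+1/(n-1)}. If α is small enough (specifically if N^{n-1}·α < 2^{-n}), then for every integer vector k ∈ ℤ^n with |k|_1 ≤ N and ν̃·k ≠ 0 one has |ν·k| > α. -/
/-!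
Since `ν̃` has common denominator `q`, a nonzero value `ν̃·k` is a nonzero integer multiple of
`1/q`, while `|ν·k - ν̃·k| ≤ |k|₁ · max_j |ν_j - ν̃_j| ≤ α`. Writing `s = q^{1/(n-1)}`, so that
`q = s^{n-1}` and `α = N / s^n`, the smallness hypothesis says `(N/s)^n < (1/2)^n`, i.e.
`2N < s`, which is exactly `2α < 1/q`. Hence `|ν·k| ≥ 1/q - α > α`.
-/

open Finset

lemma abs_sum_mul_sub_sum_mul_le {ι : Type*} (s : Finset ι) {a b x : ι → ℝ} {ε : ℝ}
    (hab : ∀ j ∈ s, |a j - b j| ≤ ε) :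
    |∑ j ∈ s, a j * x j - ∑ j ∈ s, b j * x j| ≤ ε * ∑ j ∈ s, |x j| := by
  rw [← sum_sub_distrib, mul_sum]
  refine (abs_sum_le_sum_abs _ _).trans (sum_le_sum fun j hj => ?_)
  rw [← sub_mul, abs_mul]
  exact mul_le_mul_of_nonneg_right (hab j hj) (abs_nonneg _)

lemma exists_mul_sum_mul_intCast_eq_intCast {ι : Type*} (s : Finset ι) {q : ℝ} {b : ι → ℝ}
    (hb : ∀ j ∈ s, ∃ a : ℤ, q * b j = a) (k : ι → ℤ) :
    ∃ m : ℤ, q * ∑ j ∈ s, b j * k j = m := by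
  choose a ha using hb
  refine ⟨∑ j ∈ s.attach, a j j.2 * k j, ?_⟩
  rw [mul_sum, ← sum_attach]
  push_cast
  refine sum_congr rfl fun j _ => ?_
  rw [← ha j j.2]
  ring

lemma one_div_le_abs_of_mul_eq_intCast {q x : ℝ} {m : ℤ} (hq : 0 < q) (hx : x ≠ 0)
    (h : q * x = m) : 1 / q ≤ |x| := by
  have hm : (1 : ℝ) ≤ |(m : ℝ)| := by
    rw [← Int.cast_abs, ← Int.cast_one, Int.cast_le]
    refine Int.one_le_abs fun hm0 => hx ?_
    simpa [hm0, hq.ne'] using h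
  rw [div_le_iff₀ hq, ← abs_of_pos hq, ← abs_mul, mul_comm, h]
  exact hm

lemma lt_abs_of_abs_sub_le_of_mul_eq_intCast {q x y α : ℝ} {m : ℤ} (hq : 0 < q) (hy : y ≠ 0)
    (hm : q * y = m) (hxy : |x - y| ≤ α) (hα : 2 * α < 1 / q) : α < |x| := by
  have hy_ge := one_div_le_abs_of_mul_eq_intCast hq hy hm
  have := abs_sub_abs_le_abs_sub y x
  rw [abs_sub_comm] at this
  linarith

lemma two_mul_div_pow_lt_of_pow_mul_div_pow_lt {N s : ℝ} {n : ℕ} (hs : 0 < s) (hn : n ≠ 0)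
    (h : N ^ (n - 1) * (N / s ^ n) < (2 : ℝ) ^ (-(n : ℤ))) :
    2 * (N / s ^ n) < 1 / s ^ (n - 1) := by
  have hpow : (N / s) ^ n < (1 / 2) ^ n :=
    calc (N / s) ^ n = N ^ (n - 1) * (N / s ^ n) := by rw [div_pow, ← pow_sub_one_mul hn]; ring
      _ < (2 : ℝ) ^ (-(n : ℤ)) := h
      _ = (1 / 2) ^ n := by rw [zpow_neg, zpow_natCast, one_div_pow, one_div]
  have hNs : N / s < 1 / 2 := lt_of_pow_lt_pow_left₀ n (by norm_num) hpow
  calc 2 * (N / s ^ n) = 2 * (N / s) / s ^ (n - 1) := by rw [← pow_sub_one_mul hn]; field_simp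
    _ < 1 / s ^ (n - 1) := by gcongr; linarith

lemma rpow_one_div_sub_one_pow_sub_one {q : ℝ} {n : ℕ} (hq : 0 ≤ q) (hn : 1 < n) :
    (q ^ (1 / ((n : ℝ) - 1))) ^ (n - 1) = q := by
  rw [← Nat.cast_pred (by omega), one_div]
  exact Real.rpow_inv_natCast_pow hq (by omega)

lemma rpow_one_add_one_div_sub_one {q : ℝ} {n : ℕ} (hq : 0 < q) (hn : 1 < n) :
    q ^ (1 + 1 / ((n : ℝ) - 1)) = (q ^ (1 / ((n : ℝ) - 1))) ^ n := by
  rw [Real.rpow_add hq, Real.rpow_one]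
  nth_rewrite 1 [← rpow_one_div_sub_one_pow_sub_one hq.le hn]
  exact pow_sub_one_mul (by omega) _

/-- Small denominator estimate (key step of Lemma 3 of the paper): if `ν̃` is the rational
approximation of `ν` with common denominator `q` and `α = N/q^{1+1/(n-1)}` is small enough,
then every integer vector `k` with `|k|₁ ≤ N` that is nonresonant for `ν̃` satisfies
`|ν·k| > α`. -/
theorem small_denominator_estimate (n N q : ℕ) (hn : 2 ≤ n) (hq : 0 < q)
    (ν : Fin n → ℝ) (hν1 : ν ⟨0, by omega⟩ = 1) (p : Fin n → ℤ)
    (happrox : ∀ j, j ≠ ⟨0, by omega⟩ →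
      |ν j - (p j : ℝ) / (q : ℝ)| ≤ 1 / (q : ℝ) ^ ((1 : ℝ) + 1 / ((n : ℝ) - 1)))
    (ν' : Fin n → ℝ) (hν'0 : ν' ⟨0, by omega⟩ = 1)
    (hν' : ∀ j, j ≠ ⟨0, by omega⟩ → ν' j = (p j : ℝ) / (q : ℝ))
    (α : ℝ) (hα : α = (N : ℝ) / (q : ℝ) ^ ((1 : ℝ) + 1 / ((n : ℝ) - 1)))
    (hsmall : (N : ℝ) ^ (n - 1) * α < (2 : ℝ) ^ (-(n : ℤ))) :
    ∀ k : Fin n → ℤ, (∑ j, (k j).natAbs) ≤ N →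
      (∑ j, ν' j * (k j : ℝ)) ≠ 0 → α < |∑ j, ν j * (k j : ℝ)| := by
  intro k hk hres
  have hqR : (0 : ℝ) < q := Nat.cast_pos.mpr hq
  have hq_eq := rpow_one_div_sub_one_pow_sub_one hqR.le hn
  rw [rpow_one_add_one_div_sub_one hqR hn] at happrox hα
  set s := (q : ℝ) ^ (1 / ((n : ℝ) - 1))
  have hs : 0 < s := Real.rpow_pos_of_pos hqR _
  have hkey : 2 * α < 1 / q := by
    rw [hα, ← hq_eq]
    exact two_mul_div_pow_lt_of_pow_mul_div_pow_lt hs (by omega) (hα ▸ hsmall)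
  have hden : ∀ j ∈ univ, ∃ a : ℤ, (q : ℝ) * ν' j = a := by
    intro j _
    by_cases hj : j = ⟨0, by omega⟩
    · exact ⟨q, by rw [hj, hν'0, mul_one, Int.cast_natCast]⟩
    · exact ⟨p j, by rw [hν' j hj, mul_div_cancel₀ _ hqR.ne']⟩
  have hν_sub : ∀ j ∈ univ, |ν j - ν' j| ≤ 1 / s ^ n := by
    intro j _
    by_cases hj : j = ⟨0, by omega⟩
    · rw [hj, hν1, hν'0, sub_self, abs_zero]
      positivity
    · rw [hν' j hj]
      exact happrox j hj
  have hk_real : ∑ j, |(k j : ℝ)| ≤ N := by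
    simp only [← Int.cast_abs, Int.abs_eq_natAbs, Int.cast_natCast]
    exact_mod_cast hk
  obtain ⟨m, hm⟩ := exists_mul_sum_mul_intCast_eq_intCast univ hden k
  refine lt_abs_of_abs_sub_le_of_mul_eq_intCast hqR hres hm ?_ hkey
  calc _ ≤ 1 / s ^ n * ∑ j, |(k j : ℝ)| := abs_sum_mul_sub_sum_mul_le univ hν_sub
    _ ≤ 1 / s ^ n * N := by gcongr
    _ = α := by rw [hα]; ring
end

section
/- Fix ε > 0 and n ≥ 1. Define, for s ≥ 0, the ℂ-vector space 𝒫_s of polynomials in variables (ξ, η) ∈ ℂ^n × ℂ^n (with coefficients smooth functions of auxiliary variables (P,Q)) spanned by monomials (√ε)^{a+2} ξ^l η^m with a + |l| + |m| = s and a ≥ |l| + |m|. If g₁ ∈ 𝒫_{s₁} and g₂ ∈ 𝒫_{s₂}, then the Poisson bracket {g₁, g₂} (sum of the bracket in the (P,Q) variables and the bracket in the (ξ,η) variables) lies in 𝒫_{s₁+s₂} ⊕ 𝒫_{s₁+s₂+2}. -/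
noncomputable section
open scoped BigOperators Classical

/-- The phase space `(P,Q,ξ,η)` (complexified). -/
abbrev PhSp (d n : ℕ) := ((Fin d → ℂ) × (Fin d → ℂ)) × ((Fin n → ℂ) × (Fin n → ℂ))

/-- Index `(a, l, m)` of a monomial `(√ε)^{a+2} ξ^l η^m`. -/
abbrev Idx (n : ℕ) := ℕ × (Fin n → ℕ) × (Fin n → ℕ)

/-- The monomial `(√ε)^{a+2} ξ^l η^m`. -/
def monomial (d n : ℕ) (ε : ℝ) (x : Idx n) : PhSp d n → ℂ :=
  fun z => ((Real.sqrt ε : ℝ) : ℂ) ^ (x.1 + 2) *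
    (∏ j, z.2.1 j ^ x.2.1 j) * (∏ j, z.2.2 j ^ x.2.2 j)

/-- The order `a + |l| + |m|` of the index `(a,l,m)`. -/
def degIdx (n : ℕ) (x : Idx n) : ℕ := x.1 + (∑ j, x.2.1 j) + (∑ j, x.2.2 j)

/-- Membership in the graded space `𝒫_s`: finite linear combinations, with smooth
coefficients in `(P,Q)`, of monomials `(√ε)^{a+2} ξ^l η^m` with `a + |l| + |m| = s`
and `a ≥ |l| + |m|`. -/
def InP (d n : ℕ) (ε : ℝ) (s : ℕ) (F : PhSp d n → ℂ) : Prop :=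
  ∃ (S : Finset (Idx n)) (c : Idx n → ((Fin d → ℂ) × (Fin d → ℂ)) → ℂ),
    (∀ x ∈ S, degIdx n x = s ∧ (∑ j, x.2.1 j) + (∑ j, x.2.2 j) ≤ x.1) ∧
    (∀ x, ContDiff ℂ ⊤ (c x)) ∧
    F = fun z => ∑ x ∈ S, c x z.1 * monomial d n ε x z

/-- Partial derivative in `P j`. -/
def pdP (d n : ℕ) (j : Fin d) (F : PhSp d n → ℂ) : PhSp d n → ℂ :=
  fun z => fderiv ℂ F z (((Pi.single j 1 : Fin d → ℂ), 0), (0, 0))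

/-- Partial derivative in `Q j`. -/
def pdQ (d n : ℕ) (j : Fin d) (F : PhSp d n → ℂ) : PhSp d n → ℂ :=
  fun z => fderiv ℂ F z ((0, (Pi.single j 1 : Fin d → ℂ)), (0, 0))

/-- Partial derivative in `ξ j`. -/
def pdXi (d n : ℕ) (j : Fin n) (F : PhSp d n → ℂ) : PhSp d n → ℂ :=
  fun z => fderiv ℂ F z ((0, 0), ((Pi.single j 1 : Fin n → ℂ), 0))

/-- Partial derivative in `η j`. -/
def pdEta (d n : ℕ) (j : Fin n) (F : PhSp d n → ℂ) : PhSp d n → ℂ :=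
  fun z => fderiv ℂ F z ((0, 0), (0, (Pi.single j 1 : Fin n → ℂ)))

/-- The Poisson bracket: sum of the bracket in the `(P,Q)` variables and of the bracket
in the `(ξ,η)` variables. -/
def pBr (d n : ℕ) (F G : PhSp d n → ℂ) : PhSp d n → ℂ :=
  fun z => (∑ j, (pdP d n j F z * pdQ d n j G z - pdQ d n j F z * pdP d n j G z))
    + (∑ j, (pdXi d n j F z * pdEta d n j G z - pdEta d n j F z * pdXi d n j G z))

/-- The quadratic Hamiltonian `h_ν = Σ_j ν_j ξ_j η_j` (no `ε` prefactor). -/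
def hQuad (d n : ℕ) (ν : Fin n → ℝ) : PhSp d n → ℂ :=
  fun z => ∑ j, (ν j : ℂ) * z.2.1 j * z.2.2 j

/-!
`𝒫_s` is the ℂ-span of the functions `c(P,Q) · (√ε)^{a+2} ξ^l η^m` with `c` smooth and `(a,l,m)`
admissible of order `s`. Along `P` and `Q` only the coefficient is differentiated, so the index
is kept; `∂/∂ξ_j` and `∂/∂η_j` lower `l_j` resp. `m_j` by one. Multiplying two monomials adds
the indices and adds `2` to `a`, since `(√ε)^{a₁+2} (√ε)^{a₂+2} = (√ε)^{(a₁+a₂+2)+2}`. Hence a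
term of the `(P,Q)`-bracket has order `s₁ + s₂ + 2`, and a term of the `(ξ,η)`-bracket has
order `(s₁ - 1) + (s₂ - 1) + 2 = s₁ + s₂`; in both cases `a ≥ |l| + |m|` survives.
-/

namespace PoissonGrading

open Finset

section Span

variable {𝕜 E G : Type*} [NontriviallyNormedField 𝕜] [NormedAddCommGroup E] [NormedSpace 𝕜 E]
  [NormedAddCommGroup G] [NormedSpace 𝕜 G]

theorem fderiv_apply_mem_span {A B : Set (E → G)} (v : E)
    (hA : ∀ f ∈ A, Differentiable 𝕜 f ∧ (fun z => fderiv 𝕜 f z v) ∈ Submodule.span 𝕜 B)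
    {F : E → G} (hF : F ∈ Submodule.span 𝕜 A) :
    (fun z => fderiv 𝕜 F z v) ∈ Submodule.span 𝕜 B := by
  suffices Differentiable 𝕜 F ∧ (fun z => fderiv 𝕜 F z v) ∈ Submodule.span 𝕜 B from this.2
  induction hF using Submodule.span_induction with
  | mem f hf => exact hA f hf
  | zero =>
    refine ⟨differentiable_const 0, ?_⟩
    convert zero_mem (Submodule.span 𝕜 B)
    simp
  | add f g _ _ hf hg =>
    refine ⟨hf.1.add hg.1, ?_⟩
    simp only [fderiv_add (hf.1 _) (hg.1 _), add_apply]
    exact add_mem hf.2 hg.2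
  | smul a f _ hf =>
    refine ⟨hf.1.const_smul a, ?_⟩
    simp only [fderiv_const_smul (hf.1 _), smul_apply]
    exact Submodule.smul_mem _ a hf.2

end Span

section PowProd

variable {ι M 𝕜 : Type*} [Fintype ι] [DecidableEq ι]

theorem prod_pow_update [CommMonoid M] (w : ι → M) (l : ι → ℕ) (j : ι) (m : ℕ) :
    ∏ k, w k ^ Function.update l j m k = w j ^ m * ∏ k ∈ univ.erase j, w k ^ l k := by
  rw [← mul_prod_erase univ _ (mem_univ j), Function.update_self]
  congr 1
  exact prod_congr rfl fun k hk => by rw [Function.update_of_ne (ne_of_mem_erase hk)]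

theorem sum_update_sub_one_add_one (l : ι → ℕ) {j : ι} (h : l j ≠ 0) :
    ∑ k, Function.update l j (l j - 1) k + 1 = ∑ k, l k := by
  rw [sum_update_of_mem (mem_univ j), ← erase_eq, ← add_sum_erase _ l (mem_univ j)]
  omega

theorem fderiv_prod_pow_apply_single [NontriviallyNormedField 𝕜] (l : ι → ℕ) (ξ : ι → 𝕜)
    (j : ι) :
    fderiv 𝕜 (fun ξ : ι → 𝕜 => ∏ k, ξ k ^ l k) ξ (Pi.single j 1) =
      l j * ∏ k, ξ k ^ Function.update l j (l j - 1) k := by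
  have h : HasFDerivAt (fun ξ : ι → 𝕜 => ∏ k, ξ k ^ l k) _ ξ := HasFDerivAt.finsetProd fun i _ =>
    (hasDerivAt_pow (l i) (ξ i)).comp_hasFDerivAt ξ (hasFDerivAt_apply (𝕜 := 𝕜) i ξ)
  rw [h.fderiv]
  simp [prod_pow_update, Pi.single_apply]
  ring

end PowProd

variable {d n : ℕ}

def admissible (n s : ℕ) : Set (Idx n) :=
  {x | degIdx n x = s ∧ (∑ j, x.2.1 j) + (∑ j, x.2.2 j) ≤ x.1}

def mulIdx (x y : Idx n) : Idx n :=
  (x.1 + y.1 + 2, x.2.1 + y.2.1, x.2.2 + y.2.2)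

/-- If `l_j = 0` the truncated subtraction leaves the index unchanged; the corresponding terms
of `∂/∂ξ_j` carry the factor `l_j = 0` and are discarded. -/
def decXi (x : Idx n) (j : Fin n) : Idx n :=
  (x.1, Function.update x.2.1 j (x.2.1 j - 1), x.2.2)

def decEta (x : Idx n) (j : Fin n) : Idx n :=
  (x.1, x.2.1, Function.update x.2.2 j (x.2.2 j - 1))

theorem image2_mulIdx_admissible_subset (s₁ s₂ : ℕ) :
    Set.image2 mulIdx (admissible n s₁) (admissible n s₂) ⊆ admissible n (s₁ + s₂ + 2) := by
  rintro _ ⟨x, ⟨hx, hx'⟩, y, ⟨hy, hy'⟩, rfl⟩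
  simp only [admissible, degIdx, mulIdx, Set.mem_ofPred_eq, Pi.add_apply, sum_add_distrib] at *
  omega

theorem image2_mulIdx_decXi_decEta_subset (s₁ s₂ : ℕ) (j : Fin n) :
    Set.image2 mulIdx ((decXi · j) '' {x ∈ admissible n s₁ | x.2.1 j ≠ 0})
      ((decEta · j) '' {y ∈ admissible n s₂ | y.2.2 j ≠ 0}) ⊆ admissible n (s₁ + s₂) := by
  rintro _ ⟨_, ⟨x, ⟨⟨hx, hx'⟩, hxj⟩, rfl⟩, _, ⟨y, ⟨⟨hy, hy'⟩, hyj⟩, rfl⟩, rfl⟩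
  have hl := sum_update_sub_one_add_one x.2.1 hxj
  have hm := sum_update_sub_one_add_one y.2.2 hyj
  simp only [admissible, degIdx, mulIdx, decXi, decEta, Set.mem_ofPred_eq, Pi.add_apply,
    sum_add_distrib] at *
  omega

section Monomial

variable (ε : ℝ) (x : Idx n) (z : PhSp d n)

theorem monomial_mul (y : Idx n) :
    monomial d n ε x z * monomial d n ε y z = monomial d n ε (mulIdx x y) z := by
  simp only [monomial, mulIdx, Pi.add_apply, pow_add, prod_mul_distrib]
  ring

theorem differentiable_monomial : Differentiable ℂ (monomial d n ε x : PhSp d n → ℂ) := by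
  unfold monomial
  fun_prop

theorem fderiv_monomial_apply (v : PhSp d n) :
    fderiv ℂ (monomial d n ε x) z v = ((Real.sqrt ε : ℝ) : ℂ) ^ (x.1 + 2) *
      (fderiv ℂ (fun ξ : Fin n → ℂ => ∏ k, ξ k ^ x.2.1 k) z.2.1 v.2.1 * ∏ k, z.2.2 k ^ x.2.2 k
        + (∏ k, z.2.1 k ^ x.2.1 k) *
          fderiv ℂ (fun η : Fin n → ℂ => ∏ k, η k ^ x.2.2 k) z.2.2 v.2.2) := by
  have hξ := (DifferentiableAt.hasFDerivAt (𝕜 := ℂ) (x := z.2.1)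
    (f := fun ξ : Fin n → ℂ => ∏ k, ξ k ^ x.2.1 k) (by fun_prop)).comp z
      ((ContinuousLinearMap.fst ℂ _ _).comp (ContinuousLinearMap.snd ℂ _ _)).hasFDerivAt
  have hη := (DifferentiableAt.hasFDerivAt (𝕜 := ℂ) (x := z.2.2)
    (f := fun η : Fin n → ℂ => ∏ k, η k ^ x.2.2 k) (by fun_prop)).comp z
      ((ContinuousLinearMap.snd ℂ _ _).comp (ContinuousLinearMap.snd ℂ _ _)).hasFDerivAt
  have h : HasFDerivAt (monomial d n ε x) _ z :=
    (hξ.const_mul (((Real.sqrt ε : ℝ) : ℂ) ^ (x.1 + 2))).mul hη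
  rw [h.fderiv]
  simp
  ring

theorem fderiv_monomial_apply_of_snd_eq_zero {v : PhSp d n} (hv : v.2 = 0) :
    fderiv ℂ (monomial d n ε x) z v = 0 := by
  simp [fderiv_monomial_apply, hv]

theorem fderiv_monomial_apply_xi (j : Fin n) :
    fderiv ℂ (monomial d n ε x) z ((0, 0), (Pi.single j 1, 0)) =
      x.2.1 j * monomial d n ε (decXi x j) z := by
  simp only [fderiv_monomial_apply, fderiv_prod_pow_apply_single, map_zero, monomial, decXi]
  ring

theorem fderiv_monomial_apply_eta (j : Fin n) :
    fderiv ℂ (monomial d n ε x) z ((0, 0), (0, Pi.single j 1)) =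
      x.2.2 j * monomial d n ε (decEta x j) z := by
  simp only [fderiv_monomial_apply, fderiv_prod_pow_apply_single, map_zero, monomial, decEta]
  ring

variable {ε} {c : (Fin d → ℂ) × (Fin d → ℂ) → ℂ}

theorem differentiable_smoothMonomial (hc : Differentiable ℂ c) :
    Differentiable ℂ (fun z : PhSp d n => c z.1 * monomial d n ε x z) :=
  (hc.comp differentiable_fst).mul (differentiable_monomial ε x)

theorem fderiv_smoothMonomial_apply (hc : Differentiable ℂ c) (v : PhSp d n) :
    fderiv ℂ (fun z : PhSp d n => c z.1 * monomial d n ε x z) z v =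
      fderiv ℂ c z.1 v.1 * monomial d n ε x z + c z.1 * fderiv ℂ (monomial d n ε x) z v := by
  have hcz : HasFDerivAt (fun z : PhSp d n => c z.1)
      ((fderiv ℂ c z.1).comp (ContinuousLinearMap.fst ℂ _ _)) z :=
    (hc z.1).hasFDerivAt.comp z hasFDerivAt_fst
  rw [(hcz.fun_mul (differentiable_monomial ε x z).hasFDerivAt).fderiv]
  simp
  ring

end Monomial

def smoothMonomials (d n : ℕ) (ε : ℝ) (T : Set (Idx n)) : Set (PhSp d n → ℂ) :=
  {F | ∃ x ∈ T, ∃ c : (Fin d → ℂ) × (Fin d → ℂ) → ℂ,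
    ContDiff ℂ ⊤ c ∧ F = fun z => c z.1 * monomial d n ε x z}

abbrev monomialSpan (d n : ℕ) (ε : ℝ) (T : Set (Idx n)) : Submodule ℂ (PhSp d n → ℂ) :=
  Submodule.span ℂ (smoothMonomials d n ε T)

variable {ε : ℝ}

theorem inP_iff_mem_monomialSpan {s : ℕ} {F : PhSp d n → ℂ} :
    InP d n ε s F ↔ F ∈ monomialSpan d n ε (admissible n s) := by
  constructor
  · rintro ⟨S, c, hS, hc, rfl⟩
    rw [show (fun z => ∑ x ∈ S, c x z.1 * monomial d n ε x z)
        = ∑ x ∈ S, fun z => c x z.1 * monomial d n ε x z by ext; simp]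
    exact sum_mem fun x hx => Submodule.subset_span ⟨x, hS x hx, c x, hc x, rfl⟩
  intro hF
  induction hF using Submodule.span_induction with
  | mem F hF =>
    obtain ⟨x, hx, c, hc, rfl⟩ := hF
    exact ⟨{x}, fun _ => c, fun y hy => mem_singleton.1 hy ▸ hx, fun _ => hc, by simp⟩
  | zero => exact ⟨∅, fun _ _ => 0, by simp, fun _ => contDiff_const, by ext; simp⟩
  | add F G _ _ hF hG =>
    obtain ⟨S₁, c₁, hS₁, hc₁, rfl⟩ := hF
    obtain ⟨S₂, c₂, hS₂, hc₂, rfl⟩ := hG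
    refine ⟨S₁ ∪ S₂, fun x => (if x ∈ S₁ then c₁ x else 0) + (if x ∈ S₂ then c₂ x else 0),
      fun x hx => (mem_union.1 hx).elim (hS₁ x) (hS₂ x), fun x => ?_, ?_⟩
    · apply ContDiff.add <;> split_ifs <;> first | exact hc₁ x | exact hc₂ x | exact contDiff_const
    · ext z
      simp only [Pi.add_apply, apply_ite (fun f : (Fin d → ℂ) × (Fin d → ℂ) → ℂ => f z.1),
        Pi.zero_apply, add_mul, ite_mul, zero_mul, sum_add_distrib, sum_ite_mem,
        union_inter_cancel_left, union_inter_cancel_right]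
  | smul a F _ hF =>
    obtain ⟨S, c, hS, hc, rfl⟩ := hF
    refine ⟨S, fun x P => a * c x P, hS, fun x => contDiff_const.mul (hc x), ?_⟩
    ext z
    simp [mul_sum, mul_assoc]

theorem monomialSpan_mono {T T' : Set (Idx n)} (h : T ⊆ T') :
    monomialSpan d n ε T ≤ monomialSpan d n ε T' :=
  Submodule.span_mono fun _ ⟨x, hx, c, hc, hF⟩ => ⟨x, h hx, c, hc, hF⟩

theorem mul_mem_monomialSpan {T₁ T₂ : Set (Idx n)} {F G : PhSp d n → ℂ}
    (hF : F ∈ monomialSpan d n ε T₁) (hG : G ∈ monomialSpan d n ε T₂) :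
    F * G ∈ monomialSpan d n ε (Set.image2 mulIdx T₁ T₂) := by
  have hFG := Submodule.mul_mem_mul hF hG
  rw [Submodule.span_mul_span] at hFG
  refine Submodule.span_mono ?_ hFG
  rintro _ ⟨_, ⟨x, hx, c₁, hc₁, rfl⟩, _, ⟨y, hy, c₂, hc₂, rfl⟩, rfl⟩
  refine ⟨mulIdx x y, Set.mem_image2_of_mem hx hy, c₁ * c₂, hc₁.mul hc₂, ?_⟩
  ext z
  simp only [Pi.mul_apply, ← monomial_mul]
  ring

theorem fderiv_apply_mem_monomialSpan_of_snd_eq_zero {T : Set (Idx n)} {v : PhSp d n}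
    (hv : v.2 = 0) {F : PhSp d n → ℂ} (hF : F ∈ monomialSpan d n ε T) :
    (fun z => fderiv ℂ F z v) ∈ monomialSpan d n ε T := by
  refine fderiv_apply_mem_span v ?_ hF
  rintro _ ⟨x, hx, c, hc, rfl⟩
  have hc' := hc.differentiable (by simp)
  refine ⟨differentiable_smoothMonomial x hc', Submodule.subset_span
    ⟨x, hx, fun P => fderiv ℂ c P v.1, (hc.fderiv_right le_top).clm_apply contDiff_const, ?_⟩⟩
  ext z
  simp [fderiv_smoothMonomial_apply x z hc', fderiv_monomial_apply_of_snd_eq_zero ε x z hv]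

theorem fderiv_apply_mem_monomialSpan_of_fst_eq_zero {T : Set (Idx n)} {v : PhSp d n}
    (hv : v.1 = 0) (e : Idx n → ℕ) (dec : Idx n → Idx n)
    (hmon : ∀ x z, fderiv ℂ (monomial d n ε x) z v = e x * monomial d n ε (dec x) z)
    {F : PhSp d n → ℂ} (hF : F ∈ monomialSpan d n ε T) :
    (fun z => fderiv ℂ F z v) ∈ monomialSpan d n ε (dec '' {x ∈ T | e x ≠ 0}) := by
  refine fderiv_apply_mem_span v ?_ hF
  rintro _ ⟨x, hx, c, hc, rfl⟩
  have hc' := hc.differentiable (by simp)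
  refine ⟨differentiable_smoothMonomial x hc', ?_⟩
  have hderiv : (fun z => fderiv ℂ (fun z : PhSp d n => c z.1 * monomial d n ε x z) z v) =
      (e x : ℂ) • fun z => c z.1 * monomial d n ε (dec x) z := by
    ext z
    rw [fderiv_smoothMonomial_apply x z hc', hmon, hv, map_zero]
    simp only [Pi.smul_apply, smul_eq_mul]
    ring
  rw [hderiv]
  by_cases hx0 : e x = 0
  · simp [hx0]
  exact Submodule.smul_mem _ _ (Submodule.subset_span ⟨_, ⟨x, ⟨hx, hx0⟩, rfl⟩, c, hc, rfl⟩)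

theorem pdXi_mem_monomialSpan {T : Set (Idx n)} (j : Fin n) {F : PhSp d n → ℂ}
    (hF : F ∈ monomialSpan d n ε T) :
    pdXi d n j F ∈ monomialSpan d n ε ((decXi · j) '' {x ∈ T | x.2.1 j ≠ 0}) :=
  fderiv_apply_mem_monomialSpan_of_fst_eq_zero rfl _ _ (fderiv_monomial_apply_xi ε · · j) hF

theorem pdEta_mem_monomialSpan {T : Set (Idx n)} (j : Fin n) {F : PhSp d n → ℂ}
    (hF : F ∈ monomialSpan d n ε T) :
    pdEta d n j F ∈ monomialSpan d n ε ((decEta · j) '' {x ∈ T | x.2.2 j ≠ 0}) :=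
  fderiv_apply_mem_monomialSpan_of_fst_eq_zero rfl _ _ (fderiv_monomial_apply_eta ε · · j) hF

theorem pdP_mul_pdQ_mem_monomialSpan (j : Fin d) {s₁ s₂ : ℕ} {F G : PhSp d n → ℂ}
    (hF : F ∈ monomialSpan d n ε (admissible n s₁))
    (hG : G ∈ monomialSpan d n ε (admissible n s₂)) :
    pdP d n j F * pdQ d n j G ∈ monomialSpan d n ε (admissible n (s₁ + s₂ + 2)) :=
  monomialSpan_mono (image2_mulIdx_admissible_subset s₁ s₂)
    (mul_mem_monomialSpan (fderiv_apply_mem_monomialSpan_of_snd_eq_zero rfl hF)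
      (fderiv_apply_mem_monomialSpan_of_snd_eq_zero rfl hG))

theorem pdXi_mul_pdEta_mem_monomialSpan (j : Fin n) {s₁ s₂ : ℕ} {F G : PhSp d n → ℂ}
    (hF : F ∈ monomialSpan d n ε (admissible n s₁))
    (hG : G ∈ monomialSpan d n ε (admissible n s₂)) :
    pdXi d n j F * pdEta d n j G ∈ monomialSpan d n ε (admissible n (s₁ + s₂)) :=
  monomialSpan_mono (image2_mulIdx_decXi_decEta_subset s₁ s₂ j)
    (mul_mem_monomialSpan (pdXi_mem_monomialSpan j hF) (pdEta_mem_monomialSpan j hG))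

end PoissonGrading

open PoissonGrading in
theorem poisson_bracket_grading_general (d n : ℕ) (ε : ℝ) (s₁ s₂ : ℕ)
    (g₁ g₂ : PhSp d n → ℂ) (h₁ : InP d n ε s₁ g₁) (h₂ : InP d n ε s₂ g₂) :
    ∃ F₁ F₂ : PhSp d n → ℂ, InP d n ε (s₁ + s₂) F₁ ∧ InP d n ε (s₁ + s₂ + 2) F₂ ∧
      pBr d n g₁ g₂ = F₁ + F₂ := by
  simp only [inP_iff_mem_monomialSpan] at h₁ h₂ ⊢
  refine ⟨∑ j, (pdXi d n j g₁ * pdEta d n j g₂ - pdXi d n j g₂ * pdEta d n j g₁),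
    ∑ j, (pdP d n j g₁ * pdQ d n j g₂ - pdP d n j g₂ * pdQ d n j g₁), ?_, ?_, ?_⟩
  · refine sum_mem fun j _ => sub_mem (pdXi_mul_pdEta_mem_monomialSpan j h₁ h₂) ?_
    simpa only [add_comm s₂] using pdXi_mul_pdEta_mem_monomialSpan j h₂ h₁
  · refine sum_mem fun j _ => sub_mem (pdP_mul_pdQ_mem_monomialSpan j h₁ h₂) ?_
    simpa only [add_comm s₂] using pdP_mul_pdQ_mem_monomialSpan j h₂ h₁
  · ext z
    simp only [pBr, Pi.add_apply, Finset.sum_apply, Pi.sub_apply, Pi.mul_apply, mul_comm]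
    exact add_comm _ _

/-- Lemma 4 (l.poisson): `{𝒫_{s₁}, 𝒫_{s₂}} ⊂ 𝒫_{s₁+s₂} ⊕ 𝒫_{s₁+s₂+2}`. -/
theorem poisson_bracket_grading (d n : ℕ) (ε : ℝ) (hε : 0 < ε) (s₁ s₂ : ℕ)
    (g₁ g₂ : PhSp d n → ℂ) (h₁ : InP d n ε s₁ g₁) (h₂ : InP d n ε s₂ g₂) :
    ∃ F₁ F₂ : PhSp d n → ℂ, InP d n ε (s₁ + s₂) F₁ ∧ InP d n ε (s₁ + s₂ + 2) F₂ ∧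
      pBr d n g₁ g₂ = F₁ + F₂ :=
  poisson_bracket_grading_general d n ε s₁ s₂ g₁ g₂ h₁ h₂
end
end
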